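/- For a vector space V with a nondegenerate symmetric bilinear form ⟨·,·⟩ of dimension n ≥ 3, if vectors u, v satisfy ⟨v,v⟩ ≠ 0, ⟨v,u⟩ = 0, and u is not a multiple of v, then the vanishing of 3(⟨w,u⟩/⟨w,w⟩)·u − 3(⟨w,u⟩²/⟨w,w⟩²)·w, where w and u are the images of v and u under an injective linear map A into another such space with ⟨Av,Av⟩ ≠ 0, for all admissible u, forces ⟨Av,Au⟩ = 0 for all u orthogonal to v. -/
import Mathlib


/-- Key linear-algebra step of Theorem 2.1: let `A : V → W` be an injective linear map
between spaces with nondegenerate symmetric bilinear forms, `v` non-null with `A v` non-null.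
If for every `u ⊥ v` that is not a multiple of `v` the vector
`3(⟨Av,Au⟩/⟨Av,Av⟩) Au − 3(⟨Av,Au⟩²/⟨Av,Av⟩²) Av` vanishes,
then `⟨Av,Au⟩ = 0` for every `u ⊥ v`. -/
theorem stmt2 {V W : Type*} [AddCommGroup V] [Module ℝ V] [AddCommGroup W] [Module ℝ W]
    [FiniteDimensional ℝ V] [FiniteDimensional ℝ W]
    (hdim : 3 ≤ Module.finrank ℝ V) (hdim' : 3 ≤ Module.finrank ℝ W)
    (B : LinearMap.BilinForm ℝ V) (C : LinearMap.BilinForm ℝ W)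
    (hBsymm : ∀ x y, B x y = B y x) (hCsymm : ∀ x y, C x y = C y x)
    (hBnd : ∀ x, (∀ y, B x y = 0) → x = 0)
    (hCnd : ∀ x, (∀ y, C x y = 0) → x = 0)
    (A : V →ₗ[ℝ] W) (hA : Function.Injective A)
    (v : V) (hv : B v v ≠ 0) (hAv : C (A v) (A v) ≠ 0)
    (h : ∀ u : V, B v u = 0 → (¬ ∃ c : ℝ, u = c • v) →
      (3 * (C (A v) (A u) / C (A v) (A v))) • A u
        - (3 * ((C (A v) (A u)) ^ 2 / (C (A v) (A v)) ^ 2)) • A v = 0) :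
    ∀ u : V, B v u = 0 → C (A v) (A u) = 0 := by
  intro u hu
  by_cases hm : ∃ c : ℝ, u = c • v
  · obtain ⟨c, rfl⟩ := hm
    have : c * B v v = 0 := by simpa [map_smul] using hu
    have hc : c = 0 := by
      rcases mul_eq_zero.mp this with h0 | h0
      · exact h0
      · exact absurd h0 hv
    simp [hc]
  · by_contra hα
    set α := C (A v) (A u) with hαdef
    set β := C (A v) (A v) with hβdef
    have key := h u hu hm
    have h1 : (3 * (α / β)) • A u = (3 * (α ^ 2 / β ^ 2)) • A v := by
      have := sub_eq_zero.mp key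
      simpa using this
    have hne : (3 * (α / β)) ≠ 0 := by
      simp [div_eq_zero_iff, hα, hAv]
    have h2 : A u = ((3 * (α ^ 2 / β ^ 2)) / (3 * (α / β))) • A v := by
      rw [div_eq_mul_inv, mul_comm, mul_smul, ← h1, inv_smul_smul₀ hne]
    set c : ℝ := (3 * (α ^ 2 / β ^ 2)) / (3 * (α / β)) with hc
    have h3 : A u = A (c • v) := by rw [map_smul]; exact h2
    exact hm ⟨c, hA h3⟩
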